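/- arXiv:1912.12007 — 9 statements merged into one kernel-verified Lean document; each statement's English description precedes it below -/
import Mathlib

section
/- Let p > 3 be prime and let x, y ∈ ℤ/p be nonzero. Then there exists w ∈ ℤ/p such that the pair of binary quadratic forms (x·a², y·b²) is equivalent to (a² + w·b², 2ab). -/
/-- A binary quadratic form over `ZMod p`, recorded by its coefficients:
`Q(a,b) = c20·a² + c11·a·b + c02·b²`. -/
structure BQF (p : ℕ) where
  c20 : ZMod p
  c11 : ZMod p
  c02 : ZMod p

/-- Evaluation of a binary quadratic form. -/
def BQF.eval {p : ℕ} (Q : BQF p) (a b : ZMod p) : ZMod p :=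
  Q.c20 * a ^ 2 + Q.c11 * a * b + Q.c02 * b ^ 2

/-- Two pairs `(Q₁, Q₂)` and `(Q₁', Q₂')` of binary quadratic forms over `ZMod p`
are equivalent if there are `R ∈ GL₂(ℤ/p)` and `S ∈ GL₂(ℤ/p)` with `det S = ±1`
such that `Qᵢ(R·(a,b)) = sᵢ₁·Q₁'(a,b) + sᵢ₂·Q₂'(a,b)` for all `(a,b)` and `i = 1,2`. -/
def PairEquiv {p : ℕ} (P P' : BQF p × BQF p) : Prop :=
  ∃ R S : Matrix (Fin 2) (Fin 2) (ZMod p),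
    IsUnit R.det ∧ IsUnit S.det ∧ (S.det = 1 ∨ S.det = -1) ∧
    (∀ a b : ZMod p,
      P.1.eval (R 0 0 * a + R 0 1 * b) (R 1 0 * a + R 1 1 * b) =
        S 0 0 * P'.1.eval a b + S 0 1 * P'.2.eval a b) ∧
    (∀ a b : ZMod p,
      P.2.eval (R 0 0 * a + R 0 1 * b) (R 1 0 * a + R 1 1 * b) =
        S 1 0 * P'.1.eval a b + S 1 1 * P'.2.eval a b)

/-! The substitution `(a, b) ↦ (a + t·b, a - t·b)` sends `x·a²` and `y·b²` to
`x·(a² + t²b²) + x t·(2ab)` and `y·(a² + t²b²) - y t·(2ab)`. The coefficient matrix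
`!![x, x t; y, -y t]` has determinant `-2xyt`, which is `1` for `t = -(2xy)⁻¹`. -/

theorem pairEquiv_diag_of_two_mul_mul_mul_eq_neg_one {p : ℕ} {x y t : ZMod p}
    (h : 2 * x * y * t = -1) :
    PairEquiv (⟨x, 0, 0⟩, ⟨0, 0, y⟩) (⟨1, 0, t ^ 2⟩, ⟨0, 2, 0⟩) := by
  have hR : IsUnit (1 * -t - t * 1 : ZMod p) :=
    .of_mul_eq_one (x * y) (by linear_combination -h)
  have hS : (x * -(y * t) - x * t * y : ZMod p) = 1 := by linear_combination -h
  refine ⟨!![1, t; 1, -t], !![x, x * t; y, -(y * t)], ?_, ?_, Or.inl ?_, ?_, ?_⟩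
  · rwa [Matrix.det_fin_two_of]
  · rw [Matrix.det_fin_two_of, hS]
    exact isUnit_one
  · rwa [Matrix.det_fin_two_of]
  all_goals
    intro a b
    simp only [BQF.eval, Matrix.of_apply, Matrix.cons_val', Matrix.cons_val_zero,
      Matrix.cons_val_one, Matrix.empty_val', Matrix.cons_val_fin_one]
    ring

/-- For nonzero `x, y ∈ ℤ/p`, the pair `(x·a², y·b²)` is equivalent to
`(a² + w·b², 2ab)` for some `w ∈ ℤ/p`. -/
theorem diag_pair_equiv_standard (p : ℕ) [Fact p.Prime] (hp : 3 < p)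
    (x y : ZMod p) (hx : x ≠ 0) (hy : y ≠ 0) :
    ∃ w : ZMod p, PairEquiv (⟨x, 0, 0⟩, ⟨0, 0, y⟩) (⟨1, 0, w⟩, ⟨0, 2, 0⟩) := by
  have h2 : (2 : ZMod p) ≠ 0 := Ring.two_ne_zero (by rw [ZMod.ringChar_zmod_n]; omega)
  have h2xy : 2 * x * y ≠ 0 := mul_ne_zero (mul_ne_zero h2 hx) hy
  refine ⟨(-(2 * x * y)⁻¹) ^ 2, pairEquiv_diag_of_two_mul_mul_mul_eq_neg_one ?_⟩
  rw [mul_neg, mul_inv_cancel₀ h2xy]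
end

section
/- Let p > 3 be prime and let w ∈ ℤ/p be nonzero. Then the pair of binary quadratic forms (a², w·b²) is equivalent to (a² + 4w²·b², 2ab). -/
/-- For nonzero `w ∈ ℤ/p`, the pair `(a², w·b²)` is equivalent to
`(a² + 4w²·b², 2ab)`. -/
theorem pair_a2_wb2_equiv (p : ℕ) [Fact p.Prime] (hp : 3 < p)
    (w : ZMod p) (hw : w ≠ 0) :
    PairEquiv ((⟨1, 0, 0⟩ : BQF p), ⟨0, 0, w⟩) (⟨1, 0, 4 * w ^ 2⟩, ⟨0, 2, 0⟩) := by
  have h2 : (2 : ZMod p) ≠ 0 := by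
    intro h
    have h' : ((2:ℕ) : ZMod p) = 0 := by exact_mod_cast h
    have := (ZMod.natCast_eq_zero_iff 2 p).mp h'
    have := Nat.le_of_dvd (by norm_num) this
    omega
  have h2w : (2 : ZMod p) * w ≠ 0 := mul_ne_zero h2 hw
  refine ⟨!![1, 2*w; (2*w)⁻¹, -1], !![1, 2*w; (4*w)⁻¹, -(2:ZMod p)⁻¹], ?_, ?_, ?_, ?_, ?_⟩
  · rw [Matrix.det_fin_two_of]
    have : (1:ZMod p) * (-1) - 2*w * (2*w)⁻¹ = -2 := by
      rw [mul_inv_cancel₀ (by simpa [two_mul] using h2w)]; ring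
    rw [this]
    exact isUnit_iff_ne_zero.mpr (by simpa using h2)
  · rw [Matrix.det_fin_two_of]
    have h4 : (4:ZMod p) ≠ 0 := by
      have h44 : (4:ZMod p) = 2*2 := by norm_num
      rw [h44]; exact mul_ne_zero h2 h2
    have : (1:ZMod p) * (-(2:ZMod p)⁻¹) - 2*w * (4*w)⁻¹ = -1 := by
      field_simp
      ring
    rw [this]
    exact isUnit_iff_ne_zero.mpr (by simp)
  · right
    rw [Matrix.det_fin_two_of]
    have h4 : (4:ZMod p) ≠ 0 := by
      have h44 : (4:ZMod p) = 2*2 := by norm_num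
      rw [h44]; exact mul_ne_zero h2 h2
    field_simp
    ring
  · intro a b
    simp only [BQF.eval, Matrix.of_apply, Matrix.cons_val', Matrix.cons_val_zero,
      Matrix.cons_val_one, Matrix.head_cons, Matrix.empty_val', Matrix.cons_val_fin_one,
      Matrix.head_fin_const]
    ring
  · intro a b
    simp only [BQF.eval, Matrix.of_apply, Matrix.cons_val', Matrix.cons_val_zero,
      Matrix.cons_val_one, Matrix.head_cons, Matrix.empty_val', Matrix.cons_val_fin_one,
      Matrix.head_fin_const]
    have h4 : (4:ZMod p) ≠ 0 := by
      have h44 : (4:ZMod p) = 2*2 := by norm_num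
      rw [h44]; exact mul_ne_zero h2 h2
    field_simp
    ring
end

section
/- Let p > 3 be prime and let z ∈ ℤ/p be nonzero. Then the pair of binary quadratic forms (z·a², z·b²) is equivalent to (a², b²). -/
/-- Substituting `b ↦ u⁻¹ b` turns `(u a², u b²)` into `(u a², u⁻¹ b²)`, which is
`(a², b²)` transformed by `S = diag(u, u⁻¹)` of determinant `1`. -/
theorem pairEquiv_unit_smul_diagonal {n : ℕ} (u : (ZMod n)ˣ) :
    PairEquiv ((⟨u, 0, 0⟩ : BQF n), ⟨0, 0, u⟩) (⟨1, 0, 0⟩, ⟨0, 0, 1⟩) := by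
  refine ⟨!![1, 0; 0, ↑u⁻¹], !![↑u, 0; 0, ↑u⁻¹], ?_, ?_, ?_, fun a b => ?_, fun a b => ?_⟩
  · simp [Matrix.det_fin_two_of]
  · simp [Matrix.det_fin_two_of]
  · simp [Matrix.det_fin_two_of]
  · simp [BQF.eval]
  · calc _ = (u : ZMod n) * (↑u⁻¹ * b) ^ 2 := by simp [BQF.eval]
      _ = (↑u * ↑u⁻¹) * (↑u⁻¹ * b ^ 2) := by ring
      _ = ↑u⁻¹ * b ^ 2 := by rw [Units.mul_inv, one_mul]
      _ = _ := by simp [BQF.eval]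

theorem pair_za2_zb2_equiv_general (p : ℕ) [Fact p.Prime]
    (z : ZMod p) (hz : z ≠ 0) :
    PairEquiv ((⟨z, 0, 0⟩ : BQF p), ⟨0, 0, z⟩) (⟨1, 0, 0⟩, ⟨0, 0, 1⟩) :=
  pairEquiv_unit_smul_diagonal (Units.mk0 z hz)

/-- For nonzero `z ∈ ℤ/p`, the pair `(z·a², z·b²)` is equivalent to `(a², b²)`. -/
theorem pair_za2_zb2_equiv (p : ℕ) [Fact p.Prime] (hp : 3 < p)
    (z : ZMod p) (hz : z ≠ 0) :
    PairEquiv ((⟨z, 0, 0⟩ : BQF p), ⟨0, 0, z⟩) (⟨1, 0, 0⟩, ⟨0, 0, 1⟩) :=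
  pair_za2_zb2_equiv_general p z hz
end

section
/- Let p > 3 be prime and let δ, δ' ∈ ℤ/p be nonzero. If the pair of binary quadratic forms (a² + δ·b², 2ab) is equivalent to (a² + δ'·b², 2ab), then δ'/δ is a fourth power in ℤ/p, i.e. there exists u ∈ ℤ/p with δ' = δ·u⁴. -/
/-- If `(a² + δ·b², 2ab)` is equivalent to `(a² + δ'·b², 2ab)` for nonzero `δ, δ'`,
then `δ'/δ` is a fourth power in `ℤ/p`. -/
theorem fourth_power_of_equiv (p : ℕ) [Fact p.Prime] (hp : 3 < p)
    (δ δ' : ZMod p) (hδ : δ ≠ 0) (hδ' : δ' ≠ 0)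
    (h : PairEquiv ((⟨1, 0, δ⟩ : BQF p), ⟨0, 2, 0⟩) (⟨1, 0, δ'⟩, ⟨0, 2, 0⟩)) :
    ∃ u : ZMod p, δ' = δ * u ^ 4 := by
  obtain ⟨R, S, hR, hS, hSpm, h1, h2⟩ := h
  have two_ne : (2 : ZMod p) ≠ 0 := by
    have : ((2 : ℕ) : ZMod p) ≠ 0 := by
      rw [Ne, ZMod.natCast_eq_zero_iff]
      intro hd
      have := Nat.le_of_dvd (by norm_num) hd
      omega
    simpa using this
  have four_ne : (4 : ZMod p) ≠ 0 := by
    have : (4 : ZMod p) = 2 * 2 := by norm_num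
    rw [this]
    exact mul_ne_zero two_ne two_ne
  have e1 := h1 1 0
  have e2 := h1 0 1
  have e3 := h1 1 1
  have f1 := h2 1 0
  have f2 := h2 0 1
  have f3 := h2 1 1
  simp only [BQF.eval] at e1 e2 e3 f1 f2 f3
  -- coefficient identities
  have c1 : S 0 0 = R 0 0 ^ 2 + δ * R 1 0 ^ 2 := by linear_combination -e1
  have c2 : δ' * S 0 0 = R 0 1 ^ 2 + δ * R 1 1 ^ 2 := by linear_combination -e2
  have c3 : S 0 1 = R 0 0 * R 0 1 + δ * R 1 0 * R 1 1 := by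
    have h3 : 2 * S 0 1 = 2 * (R 0 0 * R 0 1 + δ * R 1 0 * R 1 1) := by
      linear_combination -e3 + e1 + e2
    exact mul_left_cancel₀ two_ne h3
  have c4 : S 1 0 = 2 * (R 0 0 * R 1 0) := by linear_combination -f1
  have c5 : δ' * S 1 0 = 2 * (R 0 1 * R 1 1) := by linear_combination -f2
  have c6 : S 1 1 = R 0 0 * R 1 1 + R 0 1 * R 1 0 := by
    have h6 : 2 * S 1 1 = 2 * (R 0 0 * R 1 1 + R 0 1 * R 1 0) := by
      linear_combination -f3 + f1 + f2
    exact mul_left_cancel₀ two_ne h6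
  rw [c1] at c2
  rw [c4] at c5
  have hE : (S 0 0 * S 1 1 - S 0 1 * S 1 0) ^ 2 = 1 := by
    rw [← Matrix.det_fin_two]
    rcases hSpm with h' | h' <;> rw [h'] <;> ring
  rw [c1, c3, c4, c6] at hE
  set r00 := R 0 0
  set r01 := R 0 1
  set r10 := R 1 0
  set r11 := R 1 1
  set X := r00 ^ 2 + δ * r10 ^ 2 with hX
  set d : ZMod p := r00 * r11 - r01 * r10 with hd
  -- derived invariants
  have hA : δ' * X ^ 2 - (r00 * r01 + δ * r10 * r11) ^ 2 = δ * d ^ 2 := by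
    linear_combination X * c2
  have hB : (r00 * r11 + r01 * r10) ^ 2 - δ' * (2 * (r00 * r10)) ^ 2 = d ^ 2 := by
    linear_combination -(2 * (r00 * r10)) * c5
  have hC2 : 2 * (δ' * (X * (2 * (r00 * r10)))) =
      2 * ((r00 * r01 + δ * r10 * r11) * (r00 * r11 + r01 * r10)) := by
    linear_combination X * c5 + 2 * (r00 * r10) * c2
  have hAB : (δ' * X ^ 2 - (r00 * r01 + δ * r10 * r11) ^ 2) *
      ((r00 * r11 + r01 * r10) ^ 2 - δ' * (2 * (r00 * r10)) ^ 2) =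
      (δ * d ^ 2) * d ^ 2 := by rw [hA, hB]
  have hCC : (2 * (δ' * (X * (2 * (r00 * r10))))) ^ 2 =
      (2 * ((r00 * r01 + δ * r10 * r11) * (r00 * r11 + r01 * r10))) ^ 2 := by rw [hC2]
  have final4 : 4 * δ' = 4 * (δ * d ^ 4) := by
    linear_combination (-4 * δ') * hE + 4 * hAB + hCC
      - (4 * ((r00 * r01 + δ * r10 * r11) * (r00 * r11 + r01 * r10))) * hC2
  exact ⟨d, mul_left_cancel₀ four_ne final4⟩
end

section
/- Let p > 3 be prime and let δ, w ∈ ℤ/p be nonzero. Then the pair of binary quadratic forms (a² + δ·b², 2ab) is equivalent to (a² + δ·w⁴·b², 2ab). -/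
/-!
The norm form `r² - δ t²` of a finite field represents every value, in particular `w⁻¹`.
For such `r, t` the substitution `R = [[r, δw²t], [t, w²r]]` has determinant
`w²(r² - δt²) = w`, and it sends `a² + δb²` to `(r² + δt²)(a² + δw⁴b²) + 2δw²rt · 2ab`
and `2ab` to `2rt(a² + δw⁴b²) + w²(r² + δt²) · 2ab`. The resulting coefficient matrix `S`
has determinant `w²(r² - δt²)² = 1`.
-/

open Polynomial in
theorem FiniteField.exists_sq_sub_mul_sq_eq {K : Type*} [Field K] [Fintype K] {δ : K}
    (hδ : δ ≠ 0) (v : K) : ∃ r t : K, r ^ 2 - δ * t ^ 2 = v := by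
  by_cases hK : ringChar K = 2
  · obtain ⟨r, hr⟩ := FiniteField.isSquare_of_char_two hK v
    exact ⟨r, 0, by rw [hr]; ring⟩
  · obtain ⟨r, t, hrt⟩ := FiniteField.exists_root_sum_quadratic
      (f := (X ^ 2 : K[X])) (g := C (-δ) * X ^ 2 + C 0 * X + C (-v))
      (degree_X_pow 2) (degree_quadratic (neg_ne_zero.mpr hδ))
      (FiniteField.odd_card_of_char_ne_two hK)
    refine ⟨r, t, ?_⟩
    simp only [eval_add, eval_mul, eval_pow, eval_X, eval_C, zero_mul, add_zero] at hrt
    linear_combination hrt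

theorem pairEquiv_of_mul_sq_sub_mul_sq_eq_one {p : ℕ} {δ w r t : ZMod p}
    (hrt : w * (r ^ 2 - δ * t ^ 2) = 1) :
    PairEquiv ((⟨1, 0, δ⟩ : BQF p), ⟨0, 2, 0⟩) (⟨1, 0, δ * w ^ 4⟩, ⟨0, 2, 0⟩) := by
  have hR : (!![r, δ * w ^ 2 * t; t, w ^ 2 * r]).det = w := by
    rw [Matrix.det_fin_two_of]
    linear_combination w * hrt
  have hS : (!![r ^ 2 + δ * t ^ 2, 2 * δ * w ^ 2 * r * t;
      2 * r * t, w ^ 2 * (r ^ 2 + δ * t ^ 2)]).det = 1 := by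
    rw [Matrix.det_fin_two_of]
    linear_combination (w * (r ^ 2 - δ * t ^ 2) + 1) * hrt
  refine ⟨_, _, hR ▸ IsUnit.of_mul_eq_one _ hrt, hS ▸ isUnit_one, Or.inl hS, ?_, ?_⟩ <;>
  · intro a b
    simp only [BQF.eval, Matrix.of_apply, Matrix.cons_val', Matrix.cons_val_zero,
      Matrix.cons_val_one, Matrix.empty_val', Matrix.cons_val_fin_one]
    ring

theorem equiv_of_fourth_power_general (p : ℕ) [Fact p.Prime]
    (δ w : ZMod p) (hδ : δ ≠ 0) (hw : w ≠ 0) :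
    PairEquiv ((⟨1, 0, δ⟩ : BQF p), ⟨0, 2, 0⟩) (⟨1, 0, δ * w ^ 4⟩, ⟨0, 2, 0⟩) := by
  obtain ⟨r, t, hrt⟩ := FiniteField.exists_sq_sub_mul_sq_eq hδ w⁻¹
  exact pairEquiv_of_mul_sq_sub_mul_sq_eq_one (by rw [hrt, mul_inv_cancel₀ hw])

/-- For nonzero `δ, w ∈ ℤ/p`, the pair `(a² + δ·b², 2ab)` is equivalent to
`(a² + δ·w⁴·b², 2ab)`. -/
theorem equiv_of_fourth_power (p : ℕ) [Fact p.Prime] (hp : 3 < p)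
    (δ w : ZMod p) (hδ : δ ≠ 0) (hw : w ≠ 0) :
    PairEquiv ((⟨1, 0, δ⟩ : BQF p), ⟨0, 2, 0⟩) (⟨1, 0, δ * w ^ 4⟩, ⟨0, 2, 0⟩) :=
  equiv_of_fourth_power_general p δ w hδ hw
end

section
/- Let p > 3 be prime and let w, w' ∈ ℤ/p be nonzero. The pair of binary quadratic forms (a² + w·b², 2ab) is equivalent to (a² + w'·b², 2ab) if and only if there exists a unit u ∈ ℤ/p with w' = w·u⁴. Consequently the equivalence classes of pairs of the form (a² + w·b², 2ab) with w ≠ 0 are in one-to-one correspondence with the elements of (ℤ/p)ˣ/((ℤ/p)ˣ)⁴. -/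
/-!
The pair `(a² + w b², 2ab)` encodes squaring in `𝔽_p[√w]`: for `z = a + b√w`,
`z² = (a² + w b²) + 2ab·√w`. The discriminant of the binary form `(λ, μ) ↦ disc (λ Q₁ + μ Q₂)`
is an invariant of a pair up to fourth powers of units, and equals `64 w` for the pair attached
to `w`; so equivalence forces `w'/w` to be a fourth power. Conversely, if `w' = w u⁴`, choose
`x + y√w` of norm `x² - w y² = u⁻¹` (a nondegenerate binary form over a finite field of odd order
is universal); multiplying by it and rescaling `b` by `u²` realises the equivalence.
-/

theorem FiniteField.exists_sq_sub_mul_sq_eq_s9 {K : Type*} [Field K] [Fintype K]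
    (hK : Fintype.card K % 2 = 1) {w : K} (hw : w ≠ 0) (c : K) :
    ∃ x y : K, x ^ 2 - w * y ^ 2 = c := by
  open Polynomial in
  obtain ⟨x, y, hxy⟩ := FiniteField.exists_root_sum_quadratic (f := X ^ 2)
    (g := C (-w) * X ^ 2 + C 0 * X + C (-c)) (degree_X_pow 2)
    (degree_quadratic (neg_ne_zero.2 hw)) hK
  refine ⟨x, y, ?_⟩
  simp only [eval_pow, eval_X, eval_add, eval_mul, eval_C] at hxy
  linear_combination hxy

def quotEquivQuotientPowRange {G₀ : Type*} [CommGroupWithZero G₀] (n : ℕ)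
    {r : {a : G₀ // a ≠ 0} → {a : G₀ // a ≠ 0} → Prop}
    (hr : ∀ a b, r a b ↔ ∃ u : G₀ˣ, (b : G₀) = a * u ^ n) :
    Quot r ≃ G₀ˣ ⧸ (powMonoidHom n : G₀ˣ →* G₀ˣ).range :=
  Quot.congr unitsEquivNeZero.symm fun a b => by
    rw [hr]
    show _ ↔ QuotientGroup.leftRel _ _ _
    simp only [QuotientGroup.leftRel_apply, MonoidHom.mem_range, powMonoidHom_apply,
      eq_inv_mul_iff_mul_eq, Units.ext_iff, Units.val_mul, Units.val_pow_eq_pow_val,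
      unitsEquivNeZero_symm_apply, Units.val_mk0, eq_comm]

attribute [ext] BQF

variable {p : ℕ}

namespace BQF

instance : Add (BQF p) := ⟨fun Q Q' => ⟨Q.c20 + Q'.c20, Q.c11 + Q'.c11, Q.c02 + Q'.c02⟩⟩

instance : SMul (ZMod p) (BQF p) := ⟨fun c Q => ⟨c * Q.c20, c * Q.c11, c * Q.c02⟩⟩

@[simp] lemma add_c20 (Q Q' : BQF p) : (Q + Q').c20 = Q.c20 + Q'.c20 := rfl
@[simp] lemma add_c11 (Q Q' : BQF p) : (Q + Q').c11 = Q.c11 + Q'.c11 := rfl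
@[simp] lemma add_c02 (Q Q' : BQF p) : (Q + Q').c02 = Q.c02 + Q'.c02 := rfl
@[simp] lemma smul_c20 (c : ZMod p) (Q : BQF p) : (c • Q).c20 = c * Q.c20 := rfl
@[simp] lemma smul_c11 (c : ZMod p) (Q : BQF p) : (c • Q).c11 = c * Q.c11 := rfl
@[simp] lemma smul_c02 (c : ZMod p) (Q : BQF p) : (c • Q).c02 = c * Q.c02 := rfl

lemma eval_add (Q Q' : BQF p) (a b : ZMod p) : (Q + Q').eval a b = Q.eval a b + Q'.eval a b := by
  simp only [eval, add_c20, add_c11, add_c02]; ring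

lemma eval_smul (c : ZMod p) (Q : BQF p) (a b : ZMod p) : (c • Q).eval a b = c * Q.eval a b := by
  simp only [eval, smul_c20, smul_c11, smul_c02]; ring

lemma ext_of_eval {Q Q' : BQF p} (h : ∀ a b, Q.eval a b = Q'.eval a b) : Q = Q' := by
  have h10 := h 1 0
  have h01 := h 0 1
  have h11 := h 1 1
  simp only [eval, one_pow, mul_one, mul_zero, add_zero, zero_pow two_ne_zero, zero_add]
    at h10 h01 h11
  ext
  · exact h10
  · linear_combination h11 - h10 - h01
  · exact h01

def comp (Q : BQF p) (R : Matrix (Fin 2) (Fin 2) (ZMod p)) : BQF p :=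
  ⟨Q.eval (R 0 0) (R 1 0),
    2 * Q.c20 * R 0 0 * R 0 1 + Q.c11 * (R 0 0 * R 1 1 + R 0 1 * R 1 0) + 2 * Q.c02 * R 1 0 * R 1 1,
    Q.eval (R 0 1) (R 1 1)⟩

lemma eval_comp (Q : BQF p) (R : Matrix (Fin 2) (Fin 2) (ZMod p)) (a b : ZMod p) :
    (Q.comp R).eval a b = Q.eval (R 0 0 * a + R 0 1 * b) (R 1 0 * a + R 1 1 * b) := by
  simp only [comp, eval]; ring

def disc (Q : BQF p) : ZMod p := Q.c11 ^ 2 - 4 * Q.c20 * Q.c02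

lemma disc_smul (c : ZMod p) (Q : BQF p) : (c • Q).disc = c ^ 2 * Q.disc := by
  simp only [disc, smul_c20, smul_c11, smul_c02]; ring

lemma disc_comp (Q : BQF p) (R : Matrix (Fin 2) (Fin 2) (ZMod p)) :
    (Q.comp R).disc = R.det ^ 2 * Q.disc := by
  simp only [disc, comp, eval, Matrix.det_fin_two]; ring

end BQF

open BQF

def pencilDisc (P : BQF p × BQF p) : BQF p :=
  ⟨P.1.disc, 2 * P.1.c11 * P.2.c11 - 4 * (P.1.c20 * P.2.c02 + P.1.c02 * P.2.c20), P.2.disc⟩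

lemma eval_pencilDisc (P : BQF p × BQF p) (l m : ZMod p) :
    (pencilDisc P).eval l m = (l • P.1 + m • P.2).disc := by
  simp only [pencilDisc, eval, disc, add_c20, add_c11, add_c02, smul_c20, smul_c11, smul_c02]
  ring

lemma pencilDisc_comp (P : BQF p × BQF p) (R : Matrix (Fin 2) (Fin 2) (ZMod p)) :
    pencilDisc (P.1.comp R, P.2.comp R) = R.det ^ 2 • pencilDisc P := by
  ext
  · exact disc_comp P.1 R
  · simp only [pencilDisc, smul_c11, comp, eval, Matrix.det_fin_two]
    ring
  · exact disc_comp P.2 R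

lemma pencilDisc_smul_add (P : BQF p × BQF p) (S : Matrix (Fin 2) (Fin 2) (ZMod p)) :
    pencilDisc (S 0 0 • P.1 + S 0 1 • P.2, S 1 0 • P.1 + S 1 1 • P.2) =
      (pencilDisc P).comp S.transpose := by
  refine ext_of_eval fun l m => ?_
  rw [eval_comp, eval_pencilDisc, eval_pencilDisc]
  congr 1
  ext <;> simp only [add_c20, add_c11, add_c02, smul_c20, smul_c11, smul_c02,
    Matrix.transpose_apply] <;> ring

/-- Under `R` the discriminant form of the pencil is scaled by `det R ^ 2`, and under `S` it is
composed with `Sᵀ`, so its own discriminant changes by `det R ^ 4 * det S ^ 2`. -/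
theorem PairEquiv.exists_disc_pencilDisc_eq {P P' : BQF p × BQF p} (h : PairEquiv P P') :
    ∃ r : ZMod p, IsUnit r ∧ (pencilDisc P').disc = r ^ 4 * (pencilDisc P).disc := by
  obtain ⟨R, S, hR, -, hS, h1, h2⟩ := h
  have hP : (P.1.comp R, P.2.comp R) =
      (S 0 0 • P'.1 + S 0 1 • P'.2, S 1 0 • P'.1 + S 1 1 • P'.2) :=
    Prod.ext (ext_of_eval fun a b => by rw [eval_comp, h1, eval_add, eval_smul, eval_smul])
      (ext_of_eval fun a b => by rw [eval_comp, h2, eval_add, eval_smul, eval_smul])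
  have key := congrArg (fun P => (pencilDisc P).disc) hP
  simp only [pencilDisc_comp, pencilDisc_smul_add, disc_smul, disc_comp,
    Matrix.det_transpose] at key
  have hS2 : S.det ^ 2 = 1 := by rcases hS with h | h <;> simp [h]
  exact ⟨R.det, hR, by linear_combination -key - (pencilDisc P').disc * hS2⟩

def standardPair (w : ZMod p) : BQF p × BQF p := (⟨1, 0, w⟩, ⟨0, 2, 0⟩)

lemma disc_pencilDisc_standardPair (w : ZMod p) : (pencilDisc (standardPair w)).disc = 64 * w := by
  simp only [pencilDisc, standardPair, disc]; ring

variable [Fact p.Prime]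

theorem pairEquiv_standardPair_mul_pow_four (hp : p ≠ 2) {w : ZMod p} (hw : w ≠ 0)
    (u : (ZMod p)ˣ) : PairEquiv (standardPair w) (standardPair (w * u ^ 4)) := by
  obtain ⟨x, y, hxy⟩ := FiniteField.exists_sq_sub_mul_sq_eq_s9
    (by rw [ZMod.card]; exact Nat.odd_iff.mp ((Fact.out : p.Prime).odd_of_ne_two hp)) hw
    (u⁻¹ : (ZMod p)ˣ)
  -- `R` is multiplication by `x + y√w` followed by `b ↦ u²b`; `S` is multiplication by `(x + y√w)²`
  let R : Matrix (Fin 2) (Fin 2) (ZMod p) := !![x, w * u ^ 2 * y; y, u ^ 2 * x]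
  let S : Matrix (Fin 2) (Fin 2) (ZMod p) :=
    !![x ^ 2 + w * y ^ 2, 2 * w * u ^ 2 * x * y; 2 * x * y, u ^ 2 * (x ^ 2 + w * y ^ 2)]
  have hR : R.det = u := by
    rw [Matrix.det_fin_two_of]
    linear_combination (u : ZMod p) ^ 2 * hxy + (u : ZMod p) * u.mul_inv
  have hS : S.det = 1 := by
    rw [Matrix.det_fin_two_of]
    linear_combination (u : ZMod p) ^ 2 * (x ^ 2 - w * y ^ 2 + (u⁻¹ : (ZMod p)ˣ)) * hxy +
      ((u : ZMod p) * (u⁻¹ : (ZMod p)ˣ) + 1) * u.mul_inv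
  refine ⟨R, S, hR ▸ u.isUnit, hS ▸ isUnit_one, Or.inl hS, fun a b => ?_, fun a b => ?_⟩ <;>
  · simp only [R, S, standardPair, eval, Matrix.of_apply, Matrix.cons_val', Matrix.cons_val_zero,
      Matrix.cons_val_fin_one, Matrix.cons_val_one]
    ring

theorem pairEquiv_standardPair_iff (hp : p ≠ 2) {w : ZMod p} (hw : w ≠ 0) (w' : ZMod p) :
    PairEquiv (standardPair w) (standardPair w') ↔ ∃ u : (ZMod p)ˣ, w' = w * (u : ZMod p) ^ 4 := by
  refine ⟨fun h => ?_, ?_⟩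
  · obtain ⟨r, hr, hdisc⟩ := h.exists_disc_pencilDisc_eq
    rw [disc_pencilDisc_standardPair, disc_pencilDisc_standardPair] at hdisc
    have h64 : (64 : ZMod p) ≠ 0 := by
      have h2 := Ring.two_ne_zero (R := ZMod p) (by rwa [ZMod.ringChar_zmod_n])
      exact (by norm_num : (64 : ZMod p) = 2 ^ 6) ▸ pow_ne_zero 6 h2
    exact ⟨hr.unit, mul_left_cancel₀ h64 (by rw [IsUnit.unit_spec, hdisc]; ring)⟩
  · rintro ⟨u, rfl⟩
    exact pairEquiv_standardPair_mul_pow_four hp hw u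

/-- `(a² + w·b², 2ab)` is equivalent to `(a² + w'·b², 2ab)` iff `w'/w` is a
fourth power of a unit; consequently the equivalence classes of such pairs
correspond bijectively to elements of `(ℤ/p)ˣ/((ℤ/p)ˣ)⁴`. -/
theorem classification_of_standard_pairs (p : ℕ) [Fact p.Prime] (hp : 3 < p) :
    (∀ w w' : ZMod p, w ≠ 0 → w' ≠ 0 →
      (PairEquiv ((⟨1, 0, w⟩ : BQF p), ⟨0, 2, 0⟩) (⟨1, 0, w'⟩, ⟨0, 2, 0⟩) ↔
        ∃ u : (ZMod p)ˣ, w' = w * (u : ZMod p) ^ 4)) ∧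
    Nonempty
      (Quot (fun w w' : {w : ZMod p // w ≠ 0} =>
          PairEquiv ((⟨1, 0, w.1⟩ : BQF p), ⟨0, 2, 0⟩) (⟨1, 0, w'.1⟩, ⟨0, 2, 0⟩)) ≃
        ((ZMod p)ˣ ⧸ (powMonoidHom 4 : (ZMod p)ˣ →* (ZMod p)ˣ).range)) := by
  have hp2 : p ≠ 2 := by omega
  exact ⟨fun w w' hw _ => pairEquiv_standardPair_iff hp2 hw w',
    ⟨quotEquivQuotientPowRange 4 fun a b => pairEquiv_standardPair_iff hp2 a.2 b⟩⟩
end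

section
/- Let p be a prime with p ≡ 3 (mod 4) and p > 3, and let x, x', y, y' ∈ ℤ/p all be nonzero. Then the pair of binary quadratic forms (x·a², y·b²) is equivalent to (x'·a², y'·b²). -/
/-! When `-1` is not a square mod `p`, every nonzero residue is `± w²`. Rescaling `a` by `w`
and the two forms by `x w² / x'` and `y / y'` turns `(x a², y b²)` into `(x' a², y' b²)`, and
the choice of `w` makes the determinant `x y w² / (x' y')` of the scaling equal to `±1`. -/

theorem FiniteField.isSquare_or_isSquare_neg {F : Type*} [Field F] [Fintype F]
    (h : ¬IsSquare (-1 : F)) (a : F) : IsSquare a ∨ IsSquare (-a) := by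
  classical
  by_contra! ha
  have hmul : quadraticChar F (-a) = quadraticChar F (-1) * quadraticChar F a := by
    rw [← map_mul, neg_one_mul]
  simp only [quadraticChar_neg_one_iff_not_isSquare.mpr, ha.1, ha.2, h, not_false_eq_true]
    at hmul
  norm_num at hmul

theorem pairEquiv_diag_of_scaling {p : ℕ} {x y x' y' : ZMod p} (w s t : ZMod p) (hw : IsUnit w)
    (hst : s * t = 1 ∨ s * t = -1) (hx : x * w ^ 2 = s * x') (hy : y = t * y') :
    PairEquiv ((⟨x, 0, 0⟩ : BQF p), ⟨0, 0, y⟩) (⟨x', 0, 0⟩, ⟨0, 0, y'⟩) := by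
  have hS : (!![s, 0; 0, t]).det = s * t := by simp [Matrix.det_fin_two_of]
  refine ⟨!![w, 0; 0, 1], !![s, 0; 0, t], by simpa [Matrix.det_fin_two_of] using hw, ?_, ?_,
    fun a b => ?_, fun a b => ?_⟩
  · rw [hS]
    rcases hst with h | h <;> simp [h]
  · rwa [hS]
  · simp only [BQF.eval, Matrix.of_apply, Matrix.cons_val', Matrix.cons_val_zero,
      Matrix.cons_val_one, Matrix.empty_val', Matrix.cons_val_fin_one]
    linear_combination a ^ 2 * hx
  · simp only [BQF.eval, Matrix.of_apply, Matrix.cons_val', Matrix.cons_val_zero,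
      Matrix.cons_val_one, Matrix.empty_val', Matrix.cons_val_fin_one]
    linear_combination b ^ 2 * hy

theorem all_diag_pairs_equiv_general (p : ℕ) [Fact p.Prime] (hp4 : p % 4 = 3)
    (x x' y y' : ZMod p) (hx : x ≠ 0) (hx' : x' ≠ 0) (hy : y ≠ 0) (hy' : y' ≠ 0) :
    PairEquiv ((⟨x, 0, 0⟩ : BQF p), ⟨0, 0, y⟩) (⟨x', 0, 0⟩, ⟨0, 0, y'⟩) := by
  have hneg : ¬IsSquare (-1 : ZMod p) := by simp [ZMod.exists_sq_eq_neg_one_iff, hp4]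
  set c := x' * y' / (x * y) with hc_def
  obtain ⟨w, hw⟩ : ∃ w, w ^ 2 = c ∨ w ^ 2 = -c := by
    rcases FiniteField.isSquare_or_isSquare_neg hneg c with ⟨w, hw⟩ | ⟨w, hw⟩
    exacts [⟨w, .inl (by rw [hw, sq])⟩, ⟨w, .inr (by rw [hw, sq])⟩]
  have hc : c ≠ 0 := by simp [c, hx, hx', hy, hy']
  have hw0 : w ≠ 0 := by
    rintro rfl
    rcases hw with h | h <;> simp [eq_comm, hc] at h
  refine pairEquiv_diag_of_scaling w (x * w ^ 2 / x') (y / y') hw0.isUnit ?_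
    (by field_simp) (by field_simp)
  rcases hw with h | h
  exacts [.inl (by rw [h, hc_def]; field_simp), .inr (by rw [h, hc_def]; field_simp)]

/-- If `p ≡ 3 (mod 4)` and `x, x', y, y'` are nonzero, then `(x·a², y·b²)` is
equivalent to `(x'·a², y'·b²)`. -/
theorem all_diag_pairs_equiv (p : ℕ) [Fact p.Prime] (hp : 3 < p) (hp4 : p % 4 = 3)
    (x x' y y' : ZMod p) (hx : x ≠ 0) (hx' : x' ≠ 0) (hy : y ≠ 0) (hy' : y' ≠ 0) :
    PairEquiv ((⟨x, 0, 0⟩ : BQF p), ⟨0, 0, y⟩) (⟨x', 0, 0⟩, ⟨0, 0, y'⟩) :=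
  all_diag_pairs_equiv_general p hp4 x x' y y' hx hx' hy hy'
end

section
/- Let p > 3 be prime and let x, y ∈ ℤ/p be nonzero. Then the pair of binary quadratic forms (x·a², y·b²) is equivalent to (a² + 4·(y/x)²·b², 2ab). -/
/-- For nonzero `x, y ∈ ℤ/p`, the pair `(x·a², y·b²)` is equivalent to
`(a² + 4·(y/x)²·b², 2ab)`. -/
theorem diag_pair_equiv_explicit (p : ℕ) [Fact p.Prime] (hp : 3 < p)
    (x y : ZMod p) (hx : x ≠ 0) (hy : y ≠ 0) :
    PairEquiv ((⟨x, 0, 0⟩ : BQF p), ⟨0, 0, y⟩)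
      (⟨1, 0, 4 * (y / x) ^ 2⟩, ⟨0, 2, 0⟩) := by
  have h2 : (2 : ZMod p) ≠ 0 := by
    intro h
    have hd : p ∣ 2 := (ZMod.natCast_eq_zero_iff 2 p).mp (by exact_mod_cast h)
    have := Nat.le_of_dvd (by norm_num) hd
    omega
  have hc : 2 * y * (2 * y)⁻¹ = 1 := mul_inv_cancel₀ (mul_ne_zero h2 hy)
  have hd : x * x⁻¹ = 1 := mul_inv_cancel₀ hx
  refine ⟨!![(2*y)⁻¹, x⁻¹; 1, -(2*y*x⁻¹)], !![x*((2*y)⁻¹)^2, (2*y)⁻¹; y, -(2*y^2*x⁻¹)],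
    ?_, ?_, ?_, ?_, ?_⟩
  · rw [Matrix.det_fin_two_of, isUnit_iff_ne_zero,
      show (2*y)⁻¹ * -(2*y*x⁻¹) - x⁻¹ * 1 = -(2*x⁻¹) by linear_combination (-x⁻¹) * hc]
    exact neg_ne_zero.mpr (mul_ne_zero h2 (inv_ne_zero hx))
  · rw [Matrix.det_fin_two_of,
      show x*((2*y)⁻¹)^2 * -(2*y^2*x⁻¹) - (2*y)⁻¹ * y = -1 by
        linear_combination (-2*y^2*((2*y)⁻¹)^2) * hd + (-(y*(2*y)⁻¹) - 1) * hc]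
    exact isUnit_one.neg
  · right
    rw [Matrix.det_fin_two_of]
    linear_combination (-2*y^2*((2*y)⁻¹)^2) * hd + (-(y*(2*y)⁻¹) - 1) * hc
  · intro a b
    simp only [BQF.eval, Matrix.of_apply, Matrix.cons_val', Matrix.cons_val_zero,
      Matrix.cons_val_one, Matrix.head_cons, Matrix.empty_val', Matrix.cons_val_fin_one,
      Matrix.head_fin_const, div_eq_mul_inv]
    linear_combination (2*a*b*(2*y)⁻¹) * hd + (-(x*(x⁻¹)^2*b^2*(1+2*y*(2*y)⁻¹))) * hc
  · intro a b
    simp only [BQF.eval, Matrix.of_apply, Matrix.cons_val', Matrix.cons_val_zero,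
      Matrix.cons_val_one, Matrix.head_cons, Matrix.empty_val', Matrix.cons_val_fin_one,
      Matrix.head_fin_const, div_eq_mul_inv]
    ring
end

section
/- Let p > 3 be prime and let z ∈ ℤ/p be a quadratic nonresidue (z ≠ 0 and z is not a square in ℤ/p). Then the pair of binary quadratic forms (a² + b², 2ab) is not equivalent to the pair (a² + z·b², 2ab). -/
/-- For a quadratic nonresidue `z` modulo `p`, the pair `(a² + b², 2ab)` is not
equivalent to `(a² + z·b², 2ab)`. -/
theorem not_equiv_of_nonresidue (p : ℕ) [Fact p.Prime] (hp : 3 < p)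
    (z : ZMod p) (hz : z ≠ 0) (hz' : ¬ IsSquare z) :
    ¬ PairEquiv ((⟨1, 0, 1⟩ : BQF p), ⟨0, 2, 0⟩) (⟨1, 0, z⟩, ⟨0, 2, 0⟩) := by
  rintro ⟨R, S, hR, hS, -, h1, h2⟩
  have h2ne : (2 : ZMod p) ≠ 0 := by
    have : ((2 : ℕ) : ZMod p) ≠ 0 := by
      rw [Ne, ZMod.natCast_eq_zero_iff]
      intro h
      have := Nat.le_of_dvd (by norm_num) h
      omega
    simpa using this
  -- adding the two equations: (αa+βb)² = x a² + xz b² + 2y ab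
  have key : ∀ a b : ZMod p,
      ((R 0 0 + R 1 0) * a + (R 0 1 + R 1 1) * b) ^ 2 =
        (S 0 0 + S 1 0) * a ^ 2 + (S 0 0 + S 1 0) * z * b ^ 2 +
          2 * (S 0 1 + S 1 1) * a * b := by
    intro a b
    have H1 := h1 a b
    have H2 := h2 a b
    simp only [BQF.eval] at H1 H2
    linear_combination H1 + H2
  set α := R 0 0 + R 1 0 with hαdef
  set β := R 0 1 + R 1 1 with hβdef
  set x := S 0 0 + S 1 0 with hxdef
  set y := S 0 1 + S 1 1 with hydef
  have hx : α ^ 2 = x := by linear_combination key 1 0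
  have hxz : β ^ 2 = x * z := by linear_combination key 0 1
  have hy : 2 * (α * β) = 2 * y := by linear_combination key 1 1 - hx - hxz
  have hαβ : α * β = y := mul_left_cancel₀ h2ne hy
  have hmain : y ^ 2 = z * x ^ 2 := by
    linear_combination (-(α * β + y)) * hαβ + β ^ 2 * hx + x * hxz
  by_cases hx0 : x = 0
  · have hα0 : α = 0 := by
      have : α ^ 2 = 0 := by rw [hx, hx0]
      exact pow_eq_zero_iff two_ne_zero |>.mp this
    have hβ0 : β = 0 := by
      have : β ^ 2 = 0 := by rw [hxz, hx0, zero_mul]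
      exact pow_eq_zero_iff two_ne_zero |>.mp this
    have hdet : R.det = 0 := by
      rw [Matrix.det_fin_two]
      rw [hαdef] at hα0
      rw [hβdef] at hβ0
      linear_combination R 1 1 * hα0 - R 1 0 * hβ0
    rw [hdet] at hR
    exact not_isUnit_zero hR
  · have hmain' : (S 0 1 + S 1 1) ^ 2 = z * (S 0 0 + S 1 0) ^ 2 := hmain
    have hx0' : S 0 0 + S 1 0 ≠ 0 := hx0
    exact hz' ⟨y / x, by field_simp; linear_combination -hmain'⟩
end
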